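/- Let φ be an LTLf formula in NNF over atoms P and let ρ be a finite trace with |ρ| ≥ 1. Then for every index i with 0 ≤ i < |ρ|, ρ,i ⊨ φ if and only if ρ,i+1 ⊨ fp(φ, ρ[i]), where the right-hand side uses the convention that satisfaction at position |ρ| means satisfaction by the empty suffix (empty trace semantics). -/
import Mathlib


namespace LTLfSynth

open scoped Classical

/-- LTLf formulas in negation normal form. -/
inductive LTLf (P : Type*) where
  | tt : LTLf P
  | ff : LTLf P
  | atom : P → LTLf P
  | natom : P → LTLf P
  | and : LTLf P → LTLf P → LTLf P
  | or : LTLf P → LTLf P → LTLf P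
  | next : LTLf P → LTLf P
  | wnext : LTLf P → LTLf P
  | until_ : LTLf P → LTLf P → LTLf P
  | release : LTLf P → LTLf P → LTLf P

variable {P : Type*}

/-- ◇true -/
def diamondTrue : LTLf P := .until_ .tt .tt

/-- □false -/
def boxFalse : LTLf P := .release .ff .ff

/-- Finite-trace satisfaction `ρ, i ⊨ φ`, where position `ρ.length` (and beyond)
corresponds to the empty suffix (empty-trace semantics). -/
def Sat (ρ : List (Set P)) : LTLf P → ℕ → Prop
  | .tt, _ => True
  | .ff, _ => False
  | .atom p, i => i < ρ.length ∧ p ∈ ρ.getD i ∅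
  | .natom p, i => i < ρ.length ∧ p ∉ ρ.getD i ∅
  | .and φ ψ, i => Sat ρ φ i ∧ Sat ρ ψ i
  | .or φ ψ, i => Sat ρ φ i ∨ Sat ρ ψ i
  | .next φ, i => i + 1 < ρ.length ∧ Sat ρ φ (i + 1)
  | .wnext φ, i => i + 1 < ρ.length → Sat ρ φ (i + 1)
  | .until_ φ ψ, i =>
      ∃ j, i ≤ j ∧ j < ρ.length ∧ Sat ρ ψ j ∧ ∀ k, i ≤ k → k < j → Sat ρ φ k
  | .release φ ψ, i =>
      ∀ j, i ≤ j → j < ρ.length → (Sat ρ ψ j ∨ ∃ k, i ≤ k ∧ k < j ∧ Sat ρ φ k)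

/-- Single-step formula progression `fp σ φ = fp(φ, σ)`. -/
noncomputable def fp (σ : Set P) : LTLf P → LTLf P
  | .tt => .tt
  | .ff => .ff
  | .atom p => if p ∈ σ then .tt else .ff
  | .natom p => if p ∈ σ then .ff else .tt
  | .and φ ψ => .and (fp σ φ) (fp σ ψ)
  | .or φ ψ => .or (fp σ φ) (fp σ ψ)
  | .next φ => .and φ diamondTrue
  | .wnext φ => .or φ boxFalse
  | .until_ .tt .tt => .tt
  | .until_ φ ψ => .or (fp σ ψ) (.and (fp σ φ) (.and (.until_ φ ψ) diamondTrue))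
  | .release .ff .ff => .ff
  | .release φ ψ => .and (fp σ ψ) (.or (fp σ φ) (.or (.release φ ψ) boxFalse))


lemma sat_diamondTrue (ρ : List (Set P)) (j : ℕ) :
    Sat ρ (diamondTrue : LTLf P) j ↔ j < ρ.length := by
  simp only [diamondTrue, Sat]
  constructor
  · rintro ⟨k, hk, hk2, -⟩; omega
  · intro h; exact ⟨j, le_refl j, h, trivial, fun k h1 h2 => absurd h1 (by omega)⟩

lemma sat_boxFalse (ρ : List (Set P)) (j : ℕ) :
    Sat ρ (boxFalse : LTLf P) j ↔ ρ.length ≤ j := by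
  simp only [boxFalse, Sat]
  constructor
  · intro h
    by_contra hc
    rcases h j le_rfl (by omega) with h | ⟨k, _, _, h⟩ <;> exact h
  · intro h k hk hk2 ; omega

lemma sat_until_step (ρ : List (Set P)) (φ ψ : LTLf P) (i : ℕ) (hi : i < ρ.length) :
    Sat ρ (.until_ φ ψ) i ↔ Sat ρ ψ i ∨ (Sat ρ φ i ∧ Sat ρ (.until_ φ ψ) (i + 1)) := by
  constructor
  · rintro ⟨j, hij, hjl, hψ, hφ⟩
    rcases eq_or_lt_of_le hij with rfl | hlt
    · exact Or.inl hψ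
    · refine Or.inr ⟨hφ i le_rfl hlt, j, by omega, hjl, hψ, fun k h1 h2 => hφ k (by omega) h2⟩
  · rintro (hψ | ⟨hφ, j, hij, hjl, hψ, hrest⟩)
    · exact ⟨i, le_rfl, hi, hψ, fun k h1 h2 => absurd h1 (by omega)⟩
    · refine ⟨j, by omega, hjl, hψ, fun k h1 h2 => ?_⟩
      rcases eq_or_lt_of_le h1 with rfl | hlt
      · exact hφ
      · exact hrest k (by omega) h2

lemma sat_release_step (ρ : List (Set P)) (φ ψ : LTLf P) (i : ℕ) (hi : i < ρ.length) :
    Sat ρ (.release φ ψ) i ↔ Sat ρ ψ i ∧ (Sat ρ φ i ∨ Sat ρ (.release φ ψ) (i + 1)) := by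
  constructor
  · intro h
    have hψ : Sat ρ ψ i := by
      rcases h i le_rfl hi with h | ⟨k, h1, h2, _⟩
      · exact h
      · omega
    refine ⟨hψ, ?_⟩
    by_cases hφ : Sat ρ φ i
    · exact Or.inl hφ
    · refine Or.inr fun j hj hjl => ?_
      rcases h j (by omega) hjl with h | ⟨k, h1, h2, hk⟩
      · exact Or.inl h
      · rcases eq_or_lt_of_le h1 with rfl | hlt
        · exact absurd hk hφ
        · exact Or.inr ⟨k, by omega, h2, hk⟩
  · rintro ⟨hψ, hrest⟩ j hij hjl
    rcases eq_or_lt_of_le hij with rfl | hlt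
    · exact Or.inl hψ
    · rcases hrest with hφ | hrel
      · exact Or.inr ⟨i, le_rfl, hlt, hφ⟩
      · rcases hrel j (by omega) hjl with h | ⟨k, h1, h2, hk⟩
        · exact Or.inl h
        · exact Or.inr ⟨k, by omega, h2, hk⟩

lemma sat_release_empty (ρ : List (Set P)) (φ ψ : LTLf P) (j : ℕ) (h : ρ.length ≤ j) :
    Sat ρ (.release φ ψ) j := fun k h1 h2 => absurd h2 (by omega)

lemma fp_until_eq (σ : Set P) (φ ψ : LTLf P) (h : ¬(φ = LTLf.tt ∧ ψ = LTLf.tt)) :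
    fp σ (.until_ φ ψ) =
      .or (fp σ ψ) (.and (fp σ φ) (.and (.until_ φ ψ) diamondTrue)) := by
  cases φ <;> cases ψ <;> first | rfl | simp_all

lemma fp_release_eq (σ : Set P) (φ ψ : LTLf P) (h : ¬(φ = LTLf.ff ∧ ψ = LTLf.ff)) :
    fp σ (.release φ ψ) =
      .and (fp σ ψ) (.or (fp σ φ) (.or (.release φ ψ) boxFalse)) := by
  cases φ <;> cases ψ <;> first | rfl | simp_all

/-- correctness of single-step progression. -/
theorem fp_step (φ : LTLf P) (ρ : List (Set P)) (hρ : 1 ≤ ρ.length)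
    (i : ℕ) (hi : i < ρ.length) :
    Sat ρ φ i ↔ Sat ρ (fp (ρ.getD i ∅) φ) (i + 1) := by
  induction φ with
  | tt => simp [Sat, fp]
  | ff => simp [Sat, fp]
  | atom p =>
      simp only [Sat, fp]
      by_cases h : p ∈ ρ.getD i ∅
      · rw [if_pos h]; exact ⟨fun _ => trivial, fun _ => ⟨hi, h⟩⟩
      · rw [if_neg h]; exact ⟨fun hc => h hc.2, fun hc => hc.elim⟩
  | natom p =>
      simp only [Sat, fp]
      by_cases h : p ∈ ρ.getD i ∅
      · rw [if_pos h]; exact ⟨fun hc => hc.2 h, fun hc => hc.elim⟩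
      · rw [if_neg h]; exact ⟨fun _ => trivial, fun _ => ⟨hi, h⟩⟩
  | and φ ψ ihφ ihψ =>
      show (Sat ρ φ i ∧ Sat ρ ψ i) ↔ _ ∧ _
      rw [ihφ, ihψ]
  | or φ ψ ihφ ihψ =>
      show (Sat ρ φ i ∨ Sat ρ ψ i) ↔ _ ∨ _
      rw [ihφ, ihψ]
  | next φ =>
      show (i + 1 < ρ.length ∧ Sat ρ φ (i + 1)) ↔
        Sat ρ φ (i + 1) ∧ Sat ρ diamondTrue (i + 1)
      rw [sat_diamondTrue]; tauto
  | wnext φ =>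
      show (i + 1 < ρ.length → Sat ρ φ (i + 1)) ↔
        Sat ρ φ (i + 1) ∨ Sat ρ boxFalse (i + 1)
      rw [sat_boxFalse]
      constructor
      · intro h
        by_cases hc : i + 1 < ρ.length
        · exact Or.inl (h hc)
        · exact Or.inr (by omega)
      · rintro (h | h) hc
        · exact h
        · omega
  | until_ φ ψ ihφ ihψ =>
      by_cases h : φ = LTLf.tt ∧ ψ = LTLf.tt
      · obtain ⟨rfl, rfl⟩ := h
        have heq : fp (ρ.getD i ∅) (LTLf.until_ (LTLf.tt : LTLf P) .tt) = .tt := rfl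
        rw [heq]
        exact ⟨fun _ => trivial,
          fun _ => ⟨i, le_rfl, hi, trivial, fun k _ _ => trivial⟩⟩
      · rw [fp_until_eq _ _ _ h]
        have hr : Sat ρ (.or (fp (ρ.getD i ∅) ψ)
              (.and (fp (ρ.getD i ∅) φ) (.and (.until_ φ ψ) diamondTrue))) (i + 1) ↔
            Sat ρ (fp (ρ.getD i ∅) ψ) (i + 1) ∨
              (Sat ρ (fp (ρ.getD i ∅) φ) (i + 1) ∧
                (Sat ρ (.until_ φ ψ) (i + 1) ∧ Sat ρ diamondTrue (i + 1))) := Iff.rfl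
        rw [sat_until_step ρ φ ψ i hi, hr, sat_diamondTrue, ← ihφ, ← ihψ]
        constructor
        · rintro (h1 | ⟨h1, h2⟩)
          · exact Or.inl h1
          · have hlen : i + 1 < ρ.length := by
              obtain ⟨j, hj1, hj2, -, -⟩ := h2; omega
            exact Or.inr ⟨h1, h2, hlen⟩
        · tauto
  | release φ ψ ihφ ihψ =>
      by_cases h : φ = LTLf.ff ∧ ψ = LTLf.ff
      · obtain ⟨rfl, rfl⟩ := h
        have heq : fp (ρ.getD i ∅) (LTLf.release (LTLf.ff : LTLf P) .ff) = .ff := rfl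
        rw [heq]
        refine ⟨fun hc => ?_, fun hc => hc.elim⟩
        rcases hc i le_rfl hi with h1 | ⟨k, _, _, h1⟩ <;> exact h1
      · rw [fp_release_eq _ _ _ h]
        have hr : Sat ρ (.and (fp (ρ.getD i ∅) ψ)
              (.or (fp (ρ.getD i ∅) φ) (.or (.release φ ψ) boxFalse))) (i + 1) ↔
            Sat ρ (fp (ρ.getD i ∅) ψ) (i + 1) ∧
              (Sat ρ (fp (ρ.getD i ∅) φ) (i + 1) ∨
                (Sat ρ (.release φ ψ) (i + 1) ∨ Sat ρ boxFalse (i + 1))) := Iff.rfl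
        rw [sat_release_step ρ φ ψ i hi, hr, sat_boxFalse, ← ihφ, ← ihψ]
        constructor
        · tauto
        · rintro ⟨h1, (h2 | h2 | h2)⟩
          · exact ⟨h1, Or.inl h2⟩
          · exact ⟨h1, Or.inr h2⟩
          · exact ⟨h1, Or.inr (sat_release_empty ρ φ ψ _ h2)⟩

end LTLfSynth
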